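/- arXiv:2109.13587 — 2 statements merged into one kernel-verified Lean document; each statement's English description precedes it below -/
import Mathlib

section
/- Let H : [0,1]×ℝ → ℝ be continuous, convex and superlinear in the second variable, with Lagrangian L, and let c ∈ ℝ satisfy c ≤ c_H. Define L̄(s,λ) := L(s,λ) for s ∈ (0,1) and L̄(s,λ) := L(s,λ) + c − L(s,0) for s ∈ {0,1}. Then for every absolutely continuous curve η : [a,b] → [0,1] with η(a) = η(b) one has ∫_a^b L(η(τ),η̇(τ)) dτ ≥ ∫_a^b L̄(η(τ),η̇(τ)) dτ ≥ c (b − a). -/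
open Set MeasureTheory Filter Topology
open scoped Classical

noncomputable section

/-! #### Absolutely continuous curves and extended-real integrals -/

/-- `ξ` is absolutely continuous on `[a,b]`, with `ξ'` as a choice of its a.e. derivative:
`ξ'` is integrable on `[a,b]` and the fundamental theorem of calculus holds. -/
def IsACDerivOn {E : Type*} [NormedAddCommGroup E] [NormedSpace ℝ E]
    (a b : ℝ) (ξ ξ' : ℝ → E) : Prop :=
  IntegrableOn ξ' (Icc a b) ∧ ∀ t ∈ Icc a b, ξ t = ξ a + ∫ τ in a..t, ξ' τ

/-- Extended-real integral on `[a,b]`, suited to integrands which are bounded from below: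
it is the Bochner integral when the integrand is a.e. finite and integrable, `+∞` otherwise. -/
def eIntegral (a b : ℝ) (f : ℝ → EReal) : EReal :=
  if IntegrableOn (fun τ => (f τ).toReal) (Icc a b) ∧
      (∀ᵐ τ ∂(volume.restrict (Icc a b)), f τ ≠ ⊤ ∧ f τ ≠ ⊥) then
    (((∫ τ in Icc a b, (f τ).toReal) : ℝ) : EReal)
  else ⊤

/-! #### One-dimensional Hamiltonians on `[0,1] × ℝ` -/

/-- Standing assumptions on a Hamiltonian `H : [0,1] × ℝ → ℝ`: continuity, convexity in the
momentum variable, and superlinearity in the momentum variable, uniformly in the state. -/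
structure IsHamiltonian (H : ℝ → ℝ → ℝ) : Prop where
  cont : ContinuousOn (fun p : ℝ × ℝ => H p.1 p.2) (Icc 0 1 ×ˢ univ)
  convex : ∀ s ∈ Icc (0:ℝ) 1, ConvexOn ℝ univ fun μ => H s μ
  superlinear : ∀ A : ℝ, ∃ R : ℝ, ∀ s ∈ Icc (0:ℝ) 1, ∀ μ : ℝ, R ≤ |μ| → A * |μ| ≤ H s μ

/-- The Lagrangian associated to `H` via the Fenchel transform:
`L(s,λ) = sup_μ (λ μ - H(s,μ))`. -/
def Lagr (H : ℝ → ℝ → ℝ) (s lam : ℝ) : ℝ :=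
  sSup (range fun μ => lam * μ - H s μ)

/-- `c_H = - max_{s ∈ [0,1]} min_{μ ∈ ℝ} H(s,μ)`. -/
def cHam (H : ℝ → ℝ → ℝ) : ℝ :=
  - sSup ((fun s => sInf (range fun μ => H s μ)) '' Icc 0 1)

/-- The modified Lagrangian `L̄`, equal to `L` for `s ∉ {0,1}` and to
`L(s,λ) + c - L(s,0)` for `s ∈ {0,1}`. -/
def Lbar (H : ℝ → ℝ → ℝ) (c : ℝ) (s lam : ℝ) : ℝ :=
  if s = 0 ∨ s = 1 then Lagr H s lam + c - Lagr H s 0 else Lagr H s lam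

/-- The extension `F` of `L̄` to `ℝ × ℝ` obtained by successive reflections:
`F(s,λ) = L̄(s-n,λ)` on `(n,n+1]` for even `n ∈ ℕ`, `F(s,λ) = L̄(1-s+n,λ)` on `(n,n+1]`
for odd `n ∈ ℕ`, `F(s,λ) = L̄(-s-n,λ)` on `(-n-1,-n]` for even `n ∈ ℕ` and
`F(s,λ) = L̄(s+n+1,λ)` on `(-n-1,-n]` for odd `n ∈ ℕ`; equivalently,
`F(s,λ) = L̄(dist(s, 2ℤ), λ)`. -/
def Fext (H : ℝ → ℝ → ℝ) (c : ℝ) (s lam : ℝ) : ℝ :=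
  Lbar H c |s - 2 * (round (s / 2) : ℝ)| lam

/-! #### Viscosity solutions on `Q = (0,1) × (0,+∞)` -/

/-- `Q = (0,1) × (0,+∞)`, first coordinate the state `s`, second the time `t`. -/
def Qset : Set (ℝ × ℝ) := Ioo 0 1 ×ˢ Ioi 0

/-- `∂Q = ([0,1] × {0}) ∪ ({0,1} × [0,+∞))`. -/
def bdQ : Set (ℝ × ℝ) := (Icc 0 1 ×ˢ {0}) ∪ (({0, 1} : Set ℝ) ×ˢ Ici 0)

/-- `∂⁻Q = ([0,1] × {0}) ∪ ({0} × [0,+∞))`. -/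
def bdQminus : Set (ℝ × ℝ) := (Icc 0 1 ×ˢ {0}) ∪ (({0} : Set ℝ) ×ˢ Ici 0)

/-- Viscosity subsolution of `U_t + H(s,U') = 0` in `Q`. -/
def IsViscSubsol (H : ℝ → ℝ → ℝ) (U : ℝ → ℝ → ℝ) : Prop :=
  ∀ Φ : ℝ → ℝ → ℝ, ContDiff ℝ 1 (fun p : ℝ × ℝ => Φ p.1 p.2) →
    ∀ p : ℝ × ℝ, p ∈ Qset →
      IsLocalMaxOn (fun q : ℝ × ℝ => U q.1 q.2 - Φ q.1 q.2) Qset p →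
      deriv (fun t => Φ p.1 t) p.2 + H p.1 (deriv (fun s => Φ s p.2) p.1) ≤ 0

/-- Viscosity supersolution of `U_t + H(s,U') = 0` in `Q`. -/
def IsViscSupersol (H : ℝ → ℝ → ℝ) (U : ℝ → ℝ → ℝ) : Prop :=
  ∀ Φ : ℝ → ℝ → ℝ, ContDiff ℝ 1 (fun p : ℝ × ℝ => Φ p.1 p.2) →
    ∀ p : ℝ × ℝ, p ∈ Qset →
      IsLocalMinOn (fun q : ℝ × ℝ => U q.1 q.2 - Φ q.1 q.2) Qset p →
      0 ≤ deriv (fun t => Φ p.1 t) p.2 + H p.1 (deriv (fun s => Φ s p.2) p.1)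

/-- The Lax–Oleinik value function associated to a boundary datum `g` on `∂Q`:
`V(s,t) = inf { g(s₀,t₀) + ∫_{t₀}^t L(η,η̇) dτ }`, the infimum being over points
`(s₀,t₀) ∈ ∂Q` with `t₀ ≤ t` (where `t₀ = t` is only allowed for the trivial curve) and over
absolutely continuous curves `η : [t₀,t] → [0,1]` with `η(t₀) = s₀`, `η(t) = s`. -/
def valOn (B : Set (ℝ × ℝ)) (H : ℝ → ℝ → ℝ) (g : ℝ → ℝ → ℝ) (s t : ℝ) : ℝ :=
  sInf {v : ℝ | ∃ s₀ t₀ : ℝ, (s₀, t₀) ∈ B ∧ (t₀ < t ∨ (t₀ = t ∧ s₀ = s)) ∧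
    ∃ η η' : ℝ → ℝ, IsACDerivOn t₀ t η η' ∧ (∀ τ ∈ Icc t₀ t, η τ ∈ Icc (0:ℝ) 1) ∧
      η t₀ = s₀ ∧ η t = s ∧
      (v : EReal) = ((g s₀ t₀ : ℝ) : EReal) +
        eIntegral t₀ t fun τ => ((Lagr H (η τ) (η' τ) : ℝ) : EReal)}

/-- Value function for the boundary datum on `∂Q`. -/
def valV (H : ℝ → ℝ → ℝ) (g : ℝ → ℝ → ℝ) : ℝ → ℝ → ℝ := valOn bdQ H g

/-- Value function for the boundary datum on `∂⁻Q`. -/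
def valW (H : ℝ → ℝ → ℝ) (g : ℝ → ℝ → ℝ) : ℝ → ℝ → ℝ := valOn bdQminus H g

/-! #### Embedded networks in `ℝ^N` -/

/-- Euclidean space `ℝ^N`. -/
abbrev EucN (N : ℕ) := EuclideanSpace ℝ (Fin N)

/-- A regular simple arc in `ℝ^N`, parametrized on `[0,1]`: a `C¹` injective curve with
nowhere vanishing (one-sided at the endpoints) derivative. -/
structure Arc (N : ℕ) where
  toFun : ℝ → EucN N
  deriv : ℝ → EucN N
  hasDeriv : ∀ s ∈ Icc (0:ℝ) 1, HasDerivWithinAt toFun (deriv s) (Icc 0 1) s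
  contDeriv : ContinuousOn deriv (Icc 0 1)
  deriv_ne_zero : ∀ s ∈ Icc (0:ℝ) 1, deriv s ≠ 0
  injOn : InjOn toFun (Icc 0 1)

/-- `γ'` is the inverse parametrization of `γ`: `γ'(s) = γ(1-s)` on `[0,1]`. -/
def Arc.IsInverse {N : ℕ} (γ γ' : Arc N) : Prop :=
  ∀ s ∈ Icc (0:ℝ) 1, γ'.toFun s = γ.toFun (1 - s)

/-- An embedded network in `ℝ^N`: a finite, connected collection of arcs, closed under
inverse parametrization, such that two arcs which are not inverse to each other meet only at
endpoints, vertices (endpoints of arcs) never lie in the interior of an arc, and no arc is a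
loop (this is subsumed by injectivity of the arcs on `[0,1]`). -/
structure EmbNetwork (N : ℕ) where
  arcs : Set (Arc N)
  finite : arcs.Finite
  nonempty : arcs.Nonempty
  closed_inv : ∀ γ ∈ arcs, ∃ γ' ∈ arcs, Arc.IsInverse γ γ'
  disj : ∀ γ ∈ arcs, ∀ γ' ∈ arcs, γ ≠ γ' → ¬ Arc.IsInverse γ γ' →
    (γ.toFun '' Ioo 0 1) ∩ (γ'.toFun '' Icc 0 1) = ∅
  no_vertex_inside : ∀ γ ∈ arcs, ∀ γ' ∈ arcs, ∀ s ∈ Ioo (0:ℝ) 1,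
    γ.toFun s ≠ γ'.toFun 0 ∧ γ.toFun s ≠ γ'.toFun 1
  connected : IsConnected (⋃ γ ∈ arcs, γ.toFun '' Icc 0 1)

namespace EmbNetwork

variable {N : ℕ}

/-- The support `Γ ⊆ ℝ^N` of the network. -/
def carrier (Γ : EmbNetwork N) : Set (EucN N) := ⋃ γ ∈ Γ.arcs, γ.toFun '' Icc 0 1

/-- The set `V` of vertices of the network. -/
def V (Γ : EmbNetwork N) : Set (EucN N) :=
  {x | ∃ γ ∈ Γ.arcs, γ.toFun 0 = x ∨ γ.toFun 1 = x}

/-- The geodesic distance on `Γ` induced by the Euclidean metric: the infimum of the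
euclidean lengths of absolutely continuous curves joining `x` to `y` within `Γ`. -/
def geoDist (Γ : EmbNetwork N) (x y : EucN N) : ℝ :=
  sInf {l : ℝ | ∃ ξ ξ' : ℝ → EucN N, IsACDerivOn 0 1 ξ ξ' ∧
    (∀ t ∈ Icc (0:ℝ) 1, ξ t ∈ Γ.carrier) ∧ ξ 0 = x ∧ ξ 1 = y ∧
    l = ∫ τ in Icc (0:ℝ) 1, ‖ξ' τ‖}

end EmbNetwork

/-! #### Hamiltonians, flux limiters and the Lagrangian on a network -/

/-- A Hamiltonian on the network `Γ`: a family of Hamiltonians indexed by the arcs, each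
satisfying the standing assumptions, with the compatibility condition
`H_{γ̃}(s,μ) = H_γ(1-s,-μ)` for inverse arcs. -/
structure IsNetworkHamiltonian {N : ℕ} (Γ : EmbNetwork N) (H : Arc N → ℝ → ℝ → ℝ) : Prop where
  isHam : ∀ γ ∈ Γ.arcs, IsHamiltonian (H γ)
  compat : ∀ γ ∈ Γ.arcs, ∀ γ' ∈ Γ.arcs, Arc.IsInverse γ γ' →
    ∀ s ∈ Icc (0:ℝ) 1, ∀ μ : ℝ, H γ' s μ = H γ (1 - s) (-μ)

/-- A flux limiter: constants `c x` for the vertices with `c x ≤ min_{γ ∈ Γ_x} c_γ`. -/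
def IsFluxLimiter {N : ℕ} (Γ : EmbNetwork N) (H : Arc N → ℝ → ℝ → ℝ)
    (c : EucN N → ℝ) : Prop :=
  ∀ x ∈ Γ.V, ∀ γ ∈ Γ.arcs, γ.toFun 1 = x → c x ≤ cHam (H γ)

/-- The Lagrangian `L : ℝ^N × ℝ^N → ℝ ∪ {+∞}` of the network, associated to the Hamiltonian
`H` and the flux limiter `c`:  `L(x,q) = L_γ(γ⁻¹(x), (q·γ̇)/|γ̇|²)` if `x ∈ γ((0,1))` and `q`
is parallel to `γ̇(γ⁻¹ x)`; at a vertex `x`, `L(x,0) = c x`, and for `q ≠ 0` tangent,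
`L(x,q) = min L_γ(1, (q·γ̇(1))/|γ̇(1)|²)`, the minimum over arcs `γ ∈ Γ_x` with `q` parallel
to `γ̇(1)`; `L(x,q) = +∞` if `(x,q) ∉ TΓ`. -/
def eLag {N : ℕ} (Γ : EmbNetwork N) (H : Arc N → ℝ → ℝ → ℝ) (c : EucN N → ℝ)
    (x q : EucN N) : EReal :=
  if x ∈ Γ.V then
    if q = 0 then ((c x : ℝ) : EReal)
    else if ∃ γ ∈ Γ.arcs, γ.toFun 1 = x ∧ ∃ lam : ℝ, q = lam • γ.deriv 1 then
      ((sInf {v : ℝ | ∃ γ ∈ Γ.arcs, γ.toFun 1 = x ∧ (∃ lam : ℝ, q = lam • γ.deriv 1) ∧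
        v = Lagr (H γ) 1 ((inner ℝ q (γ.deriv 1) : ℝ) / ‖γ.deriv 1‖ ^ 2)} : ℝ) : EReal)
    else ⊤
  else
    if ∃ γ ∈ Γ.arcs, ∃ s ∈ Ioo (0:ℝ) 1, γ.toFun s = x ∧ ∃ lam : ℝ, q = lam • γ.deriv s then
      ((sInf {v : ℝ | ∃ γ ∈ Γ.arcs, ∃ s ∈ Ioo (0:ℝ) 1, γ.toFun s = x ∧
        (∃ lam : ℝ, q = lam • γ.deriv s) ∧
        v = Lagr (H γ) s ((inner ℝ q (γ.deriv s) : ℝ) / ‖γ.deriv s‖ ^ 2)} : ℝ) : EReal)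
    else ⊤

/-- The (extended-real valued) action `∫_a^b L(ξ,ξ̇) dτ` of a curve. -/
def eAction {N : ℕ} (Γ : EmbNetwork N) (H : Arc N → ℝ → ℝ → ℝ) (c : EucN N → ℝ)
    (a b : ℝ) (ξ ξ' : ℝ → EucN N) : EReal :=
  eIntegral a b fun τ => eLag Γ H c (ξ τ) (ξ' τ)

/-- A curve `ξ : [a,b] → Γ` is admissible if there is a finite partition
`a = t₁ < t₂ < ⋯ < t_m = b` whose interior points are mapped to vertices, such that on each
open subinterval either the curve avoids the vertices and has distinct endpoints, or it is
constantly equal to a vertex. -/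
def Admissible {N : ℕ} (Γ : EmbNetwork N) (a b : ℝ) (ξ : ℝ → EucN N) : Prop :=
  ∃ (n : ℕ) (t : ℕ → ℝ), t 0 = a ∧ t n = b ∧ (∀ i, i < n → t i < t (i + 1)) ∧
    (∀ i, 0 < i → i < n → ξ (t i) ∈ Γ.V) ∧
    ∀ i, i < n →
      ((∀ τ ∈ Ioo (t i) (t (i + 1)), ξ τ ∉ Γ.V) ∧ ξ (t i) ≠ ξ (t (i + 1))) ∨
      ∃ x ∈ Γ.V, ∀ τ ∈ Ioo (t i) (t (i + 1)), ξ τ = x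

/-- The minimal action functional `S(x,t,y,r)`: the infimum of the actions
`∫_0^{r-t} L(ξ,ξ̇) dτ` over absolutely continuous curves `ξ : [0,r-t] → ℝ^N` with
`ξ(0) = x`, `ξ(r-t) = y`. -/
def minAction {N : ℕ} (Γ : EmbNetwork N) (H : Arc N → ℝ → ℝ → ℝ) (c : EucN N → ℝ)
    (x : EucN N) (t : ℝ) (y : EucN N) (r : ℝ) : ℝ :=
  sInf {v : ℝ | ∃ ξ ξ' : ℝ → EucN N, IsACDerivOn 0 (r - t) ξ ξ' ∧
    ξ 0 = x ∧ ξ (r - t) = y ∧ (v : EReal) = eAction Γ H c 0 (r - t) ξ ξ'}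

/-- The Lax–Oleinik formula on the network:
`u(x,t) = inf { ∫_0^t L(ξ,ξ̇) dτ + u₀(ξ(0)) }`, the infimum over absolutely continuous
curves `ξ : [0,t] → Γ` with `ξ(t) = x`. -/
def laxOleinik {N : ℕ} (Γ : EmbNetwork N) (H : Arc N → ℝ → ℝ → ℝ) (c : EucN N → ℝ)
    (u₀ : EucN N → ℝ) (x : EucN N) (t : ℝ) : ℝ :=
  sInf {v : ℝ | ∃ ξ ξ' : ℝ → EucN N, IsACDerivOn 0 t ξ ξ' ∧
    (∀ τ ∈ Icc 0 t, ξ τ ∈ Γ.carrier) ∧ ξ t = x ∧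
    (v : EReal) = ((u₀ (ξ 0) : ℝ) : EReal) + eAction Γ H c 0 t ξ ξ'}

/-! #### Sub- and supersolutions of the time-dependent problem on the network -/

/-- Subsolution of (HJΓ): for every arc, `v ∘ γ` is a viscosity subsolution on `Q`, and at
every vertex `x` and `t₀ > 0`, every `C¹` supertangent `ψ` to `v(x,·)` at `t₀` satisfies
`ψ'(t₀) ≤ c x`. -/
def IsNetSubsol {N : ℕ} (Γ : EmbNetwork N) (H : Arc N → ℝ → ℝ → ℝ) (c : EucN N → ℝ)
    (v : EucN N → ℝ → ℝ) : Prop :=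
  (∀ γ ∈ Γ.arcs, IsViscSubsol (H γ) fun s t => v (γ.toFun s) t) ∧
  ∀ x ∈ Γ.V, ∀ t₀ : ℝ, 0 < t₀ → ∀ ψ : ℝ → ℝ, ContDiff ℝ 1 ψ →
    IsLocalMax (fun t => v x t - ψ t) t₀ → deriv ψ t₀ ≤ c x

/-- Supersolution of (HJΓ): for every arc, `v ∘ γ` is a viscosity supersolution on `Q`, and
at every vertex `x` and `t₀ > 0`, if some `C¹` subtangent `φ` to `v(x,·)` at `t₀` has
`φ'(t₀) < c x`, then there is an arc `γ ∈ Γ_x` such that every `C¹` subtangent `Φ` to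
`v ∘ γ` at `(1,t₀)`, constrained to the closure of `Q`, satisfies
`Φ_t(1,t₀) + H_γ(1,Φ'(1,t₀)) ≥ 0`. -/
def IsNetSupersol {N : ℕ} (Γ : EmbNetwork N) (H : Arc N → ℝ → ℝ → ℝ) (c : EucN N → ℝ)
    (v : EucN N → ℝ → ℝ) : Prop :=
  (∀ γ ∈ Γ.arcs, IsViscSupersol (H γ) fun s t => v (γ.toFun s) t) ∧
  ∀ x ∈ Γ.V, ∀ t₀ : ℝ, 0 < t₀ → ∀ φ : ℝ → ℝ, ContDiff ℝ 1 φ →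
    IsLocalMin (fun t => v x t - φ t) t₀ → deriv φ t₀ < c x →
    ∃ γ ∈ Γ.arcs, γ.toFun 1 = x ∧
      ∀ Φ : ℝ → ℝ → ℝ, ContDiff ℝ 1 (fun p : ℝ × ℝ => Φ p.1 p.2) →
        IsLocalMinOn (fun p : ℝ × ℝ => v (γ.toFun p.1) p.2 - Φ p.1 p.2)
          (Icc 0 1 ×ˢ Ici 0) (1, t₀) →
        0 ≤ deriv (fun t => Φ 1 t) t₀ + H γ 1 (deriv (fun s => Φ s t₀) 1)

end

/-! By the Fenchel inequality `L(s,λ) ≥ λ μ - H(s,μ)` and `L(s,0) = -min H(s,·) ≥ c_H ≥ c`,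
a minimizer `m` of `H(x,·)` satisfies `L̄(y,λ) ≥ m λ + c - ε` for all `y` near `x`: in the
interior by continuity of `H(·,m)`, at an endpoint `y = x` because the correction term of `L̄`
is exactly `c + H(x,m)`. The slopes with this property form an intersection of half-lines,
hence a convex set, so a partition of unity glues these local constants into a continuous `μ`
with `L̄(s,λ) ≥ μ(s) λ + c - ε` on `[0,1]`. Along the closed curve `η` the exact form
`μ(η) η̇` integrates to zero, whence `∫ L̄(η,η̇) ≥ (c - ε)(b - a)`. The first inequality holds
because `L̄ - L = c - L(s,0) ≤ 0` on `{0,1}` and vanishes elsewhere. -/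

theorem LipschitzOnWith.comp_absolutelyContinuousOnInterval {X Y : Type*} [PseudoMetricSpace X]
    [PseudoMetricSpace Y] {φ : X → Y} {K : NNReal} {s : Set X} {f : ℝ → X} {a b : ℝ}
    (hφ : LipschitzOnWith K φ s) (hf : AbsolutelyContinuousOnInterval f a b)
    (hfs : MapsTo f (uIcc a b) s) : AbsolutelyContinuousOnInterval (φ ∘ f) a b := by
  have hK : Tendsto (fun E : ℕ × (ℕ → ℝ × ℝ) =>
      K * ∑ i ∈ Finset.range E.1, dist (f (E.2 i).1) (f (E.2 i).2))
      (AbsolutelyContinuousOnInterval.totalLengthFilter ⊓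
        𝓟 (AbsolutelyContinuousOnInterval.disjWithin a b)) (𝓝 0) := by
    simpa using Tendsto.const_mul (K : ℝ) (show Tendsto _ _ _ from hf)
  refine squeeze_zero' (Eventually.of_forall fun _ => Finset.sum_nonneg fun _ _ => dist_nonneg)
    ?_ hK
  filter_upwards [mem_inf_of_right (mem_principal_self _)] with E hE
  rw [Finset.mul_sum]
  exact Finset.sum_le_sum fun i hi =>
    hφ.dist_le_mul _ (hfs (hE.1 i hi).1) _ (hfs (hE.1 i hi).2)

theorem AbsolutelyContinuousOnInterval.congr {X : Type*} [PseudoMetricSpace X] {f g : ℝ → X}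
    {a b : ℝ} (hf : AbsolutelyContinuousOnInterval f a b) (hfg : EqOn f g (uIcc a b)) :
    AbsolutelyContinuousOnInterval g a b := by
  refine Tendsto.congr' ?_ hf
  filter_upwards [mem_inf_of_right (mem_principal_self _)] with E hE
  exact Finset.sum_congr rfl fun i hi => by rw [hfg (hE.1 i hi).1, hfg (hE.1 i hi).2]

theorem AbsolutelyContinuousOnInterval.integral_comp_mul_deriv {f g : ℝ → ℝ} {a b : ℝ}
    (hf : AbsolutelyContinuousOnInterval f a b) (hg : Continuous g) :
    ∫ x in a..b, g (f x) * deriv f x = ∫ y in f a..f b, g y := by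
  set G : ℝ → ℝ := fun y => ∫ t in f a..y, g t
  have hG : ∀ y, HasDerivAt G (g y) y := fun y =>
    (hg.integral_hasStrictDerivAt (f a) y).hasDerivAt
  have hG₁ : ContDiff ℝ 1 G := contDiff_one_iff_deriv.2
    ⟨fun y => (hG y).differentiableAt, (funext fun y => (hG y).deriv : deriv G = g) ▸ hg⟩
  obtain ⟨K, hK⟩ := hG₁.locallyLipschitz.locallyLipschitzOn.exists_lipschitzOnWith_of_compact
    (isCompact_uIcc.image_of_continuousOn hf.continuousOn)
  calc ∫ x in a..b, g (f x) * deriv f x = ∫ x in a..b, deriv (G ∘ f) x := by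
        refine intervalIntegral.integral_congr_ae ?_
        filter_upwards [hf.ae_differentiableAt] with x hx hxab
        exact ((hG (f x)).comp x (hx (uIoc_subset_uIcc hxab)).hasDerivAt).deriv.symm
    _ = G (f b) - G (f a) :=
        (hK.comp_absolutelyContinuousOnInterval hf (mapsTo_image f _)).integral_deriv_eq_sub
    _ = ∫ y in f a..f b, g y := by simp [G]

section IsACDerivOn

variable {a b : ℝ} {η η' : ℝ → ℝ}

theorem IsACDerivOn.intervalIntegrable (h : IsACDerivOn a b η η') (hab : a ≤ b) :
    IntervalIntegrable η' volume a b :=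
  (intervalIntegrable_iff_integrableOn_Icc_of_le hab).2 h.1

theorem IsACDerivOn.absolutelyContinuousOnInterval (h : IsACDerivOn a b η η') (hab : a ≤ b) :
    AbsolutelyContinuousOnInterval η a b := by
  have hconst : AbsolutelyContinuousOnInterval (fun _ => η a) a b :=
    (LipschitzWith.const (η a)).lipschitzOnWith.absolutelyContinuousOnInterval
  refine (hconst.fun_add ((h.intervalIntegrable hab).absolutelyContinuousOnInterval_intervalIntegral
    left_mem_uIcc)).congr fun t ht => ?_
  rw [uIcc_of_le hab] at ht
  exact (h.2 t ht).symm

theorem IsACDerivOn.continuousOn (h : IsACDerivOn a b η η') (hab : a ≤ b) :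
    ContinuousOn η (Icc a b) :=
  (h.absolutelyContinuousOnInterval hab).continuousOn.mono Icc_subset_uIcc

theorem IsACDerivOn.ae_hasDerivAt (h : IsACDerivOn a b η η') (hab : a ≤ b) :
    ∀ᵐ x, x ∈ Ioo a b → HasDerivAt η (η' x) x := by
  filter_upwards [(h.intervalIntegrable hab).ae_hasDerivAt_integral] with x hx hxab
  have hxab' : x ∈ uIcc a b := by rw [uIcc_of_le hab]; exact Ioo_subset_Icc_self hxab
  refine ((hx hxab' a left_mem_uIcc).const_add (η a)).congr_of_eventuallyEq ?_
  filter_upwards [Ioo_mem_nhds hxab.1 hxab.2] with y hy using h.2 y (Ioo_subset_Icc_self hy)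

theorem IsACDerivOn.setIntegral_comp_mul_eq_zero (h : IsACDerivOn a b η η') (hab : a ≤ b)
    (hend : η a = η b) {g : ℝ → ℝ} (hg : Continuous g) :
    ∫ τ in Icc a b, g (η τ) * η' τ = 0 := by
  calc ∫ τ in Icc a b, g (η τ) * η' τ = ∫ τ in Ioo a b, g (η τ) * deriv η τ := by
        rw [integral_Icc_eq_integral_Ioo]
        refine setIntegral_congr_ae measurableSet_Ioo ?_
        filter_upwards [h.ae_hasDerivAt hab] with x hx hxab using by rw [(hx hxab).deriv]
    _ = ∫ y in η a..η b, g y := by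
        rw [← (h.absolutelyContinuousOnInterval hab).integral_comp_mul_deriv hg,
          intervalIntegral.integral_of_le hab, integral_Ioc_eq_integral_Ioo]
    _ = 0 := by rw [hend, intervalIntegral.integral_same]

end IsACDerivOn

section eIntegral

variable {a b : ℝ} {f : ℝ → ℝ}

theorem eIntegral_coe :
    eIntegral a b (fun τ => ((f τ : ℝ) : EReal)) =
      if IntegrableOn f (Icc a b) then (((∫ τ in Icc a b, f τ) : ℝ) : EReal) else ⊤ := by
  simp only [eIntegral, EReal.toReal_coe, ne_eq, EReal.coe_ne_top, EReal.coe_ne_bot,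
    not_false_eq_true, and_self, eventually_true, and_true]

theorem eIntegral_coe_add_le {d : ℝ → ℝ} (hd : IntegrableOn d (Icc a b))
    (hd_nonpos : ∀ τ, d τ ≤ 0) :
    eIntegral a b (fun τ => ((f τ + d τ : ℝ) : EReal)) ≤
      eIntegral a b (fun τ => ((f τ : ℝ) : EReal)) := by
  rw [eIntegral_coe, eIntegral_coe]
  split_ifs with hfd hf hf
  · rw [EReal.coe_le_coe_iff, integral_add hf hd]
    linarith [integral_nonpos hd_nonpos (μ := volume.restrict (Icc a b))]
  · exact le_top
  · exact absurd (hf.add hd) hfd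
  · exact le_top

theorem coe_le_eIntegral_coe {C : ℝ}
    (h : IntegrableOn f (Icc a b) → C ≤ ∫ τ in Icc a b, f τ) :
    (C : EReal) ≤ eIntegral a b (fun τ => ((f τ : ℝ) : EReal)) := by
  rw [eIntegral_coe]
  split_ifs with hf
  · exact EReal.coe_le_coe_iff.2 (h hf)
  · exact le_top

end eIntegral

theorem Set.Finite.integrableOn_indicator_comp {S s : Set ℝ} (hS : S.Finite) (φ : ℝ → ℝ)
    {η : ℝ → ℝ} (hs : volume s < ⊤) (hη : AEMeasurable η (volume.restrict s)) :
    IntegrableOn (fun τ => S.indicator φ (η τ)) s := by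
  have hm : Measurable (S.indicator φ) :=
    measurable_zero.measurable_of_countable_ne (hS.countable.mono fun x hx => by
      by_contra hxS
      exact hx (indicator_of_notMem hxS φ).symm)
  obtain ⟨C, hC⟩ := (hS.image fun x => ‖φ x‖).bddAbove
  refine IntegrableOn.of_bound hs (hm.comp_aemeasurable hη).aestronglyMeasurable (max C 0)
    (ae_of_all _ fun τ => ?_)
  by_cases hτ : η τ ∈ S
  · rw [indicator_of_mem hτ]
    exact le_max_of_le_left (hC (mem_image_of_mem _ hτ))
  · simp [indicator_of_notMem hτ]

theorem lagr_zero_of_isLeast {H : ℝ → ℝ → ℝ} {s m : ℝ}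
    (hm : IsLeast (range fun μ => H s μ) (H s m)) : Lagr H s 0 = -H s m := by
  refine IsGreatest.csSup_eq ⟨⟨m, by simp⟩, ?_⟩
  rintro _ ⟨μ, rfl⟩
  simpa using hm.2 (mem_range_self μ)

theorem lbar_eq_lagr_add_indicator (H : ℝ → ℝ → ℝ) (c s lam : ℝ) :
    Lbar H c s lam = Lagr H s lam + ({0, 1} : Set ℝ).indicator (fun s => c - Lagr H s 0) s := by
  unfold Lbar
  split_ifs with h
  · rw [indicator_of_mem (by simpa using h)]
    ring
  · rw [indicator_of_notMem (by simpa using h), add_zero]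

namespace IsHamiltonian

variable {H : ℝ → ℝ → ℝ} {c s : ℝ}

theorem continuous_right (hH : IsHamiltonian H) (hs : s ∈ Icc (0:ℝ) 1) :
    Continuous fun μ => H s μ :=
  hH.cont.comp_continuous (continuous_const.prodMk continuous_id) fun _ => ⟨hs, mem_univ _⟩

theorem continuousOn_left (hH : IsHamiltonian H) (μ : ℝ) :
    ContinuousOn (fun s => H s μ) (Icc 0 1) :=
  hH.cont.comp (continuous_id.prodMk continuous_const).continuousOn fun _ hs => ⟨hs, mem_univ _⟩

theorem tendsto_sub_mul_cocompact (hH : IsHamiltonian H) (hs : s ∈ Icc (0:ℝ) 1) (lam : ℝ) :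
    Tendsto (fun μ => H s μ - lam * μ) (cocompact ℝ) atTop := by
  obtain ⟨R, hR⟩ := hH.superlinear (|lam| + 1)
  refine tendsto_atTop_mono' _ ?_ tendsto_norm_cocompact_atTop
  filter_upwards [tendsto_norm_cocompact_atTop.eventually_ge_atTop R] with μ hμ
  rw [Real.norm_eq_abs] at hμ ⊢
  have hlam : lam * μ ≤ |lam| * |μ| := (le_abs_self _).trans (abs_mul lam μ).le
  linarith [hR s hs μ hμ]

theorem exists_isLeast (hH : IsHamiltonian H) (hs : s ∈ Icc (0:ℝ) 1) :
    ∃ m, IsLeast (range fun μ => H s μ) (H s m) := by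
  obtain ⟨m, hm⟩ := (hH.continuous_right hs).exists_forall_le
    (by simpa using hH.tendsto_sub_mul_cocompact hs 0)
  exact ⟨m, mem_range_self m, by rintro _ ⟨μ, rfl⟩; exact hm μ⟩

theorem le_lagr (hH : IsHamiltonian H) (hs : s ∈ Icc (0:ℝ) 1) (lam μ : ℝ) :
    lam * μ - H s μ ≤ Lagr H s lam := by
  obtain ⟨μ₀, hμ₀⟩ := Continuous.exists_forall_le (f := fun μ => H s μ - lam * μ)
    ((hH.continuous_right hs).sub (continuous_const_mul lam))
    (hH.tendsto_sub_mul_cocompact hs lam)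
  refine le_csSup ⟨lam * μ₀ - H s μ₀, ?_⟩ (mem_range_self μ)
  rintro _ ⟨ν, rfl⟩
  linarith [hμ₀ ν]

theorem le_lagr_zero (hH : IsHamiltonian H) (hc : c ≤ cHam H) (hs : s ∈ Icc (0:ℝ) 1) :
    c ≤ Lagr H s 0 := by
  obtain ⟨m, hm⟩ := hH.exists_isLeast hs
  obtain ⟨C, hC⟩ := isCompact_Icc.bddAbove_image (hH.continuousOn_left 0)
  have hbdd : BddAbove ((fun s => sInf (range fun μ => H s μ)) '' Icc 0 1) := by
    refine ⟨C, ?_⟩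
    rintro _ ⟨s', hs', rfl⟩
    obtain ⟨m', hm'⟩ := hH.exists_isLeast hs'
    dsimp only
    rw [hm'.csInf_eq]
    exact (hm'.2 (mem_range_self 0)).trans (hC (mem_image_of_mem _ hs'))
  have hmin := le_csSup hbdd (mem_image_of_mem _ hs)
  rw [hm.csInf_eq] at hmin
  rw [lagr_zero_of_isLeast hm]
  unfold cHam at hc
  linarith

theorem eventually_le_lbar (hH : IsHamiltonian H) (hc : c ≤ cHam H) {ε x m : ℝ} (hε : 0 < ε)
    (hx : x ∈ Icc (0:ℝ) 1) (hm : IsLeast (range fun μ => H x μ) (H x m)) :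
    ∀ᶠ y in 𝓝 x, y ∈ Icc (0:ℝ) 1 → ∀ lam, m * lam + (c - ε) ≤ Lbar H c y lam := by
  have hlagr := lagr_zero_of_isLeast hm
  have hcx := hH.le_lagr_zero hc hx
  have hnear : ∀ᶠ y in 𝓝[Icc 0 1] x, H y m < H x m + ε :=
    (hH.continuousOn_left m x hx).eventually (gt_mem_nhds (by linarith))
  have hend : ∀ᶠ y in 𝓝 x, y ∈ ({0, 1} : Set ℝ) → y = x :=
    eventually_of_mem ((toFinite (({0, 1} : Set ℝ) \ {x})).isClosed.isOpen_compl.mem_nhds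
      (by simp)) fun y hy hy01 => by_contra fun hne => hy ⟨hy01, hne⟩
  filter_upwards [eventually_nhdsWithin_iff.1 hnear, hend] with y hyH hyx hy lam
  have hle := hH.le_lagr hy lam m
  unfold Lbar
  split_ifs with h01
  · obtain rfl : y = x := hyx h01
    linarith
  · linarith [hyH hy]

theorem exists_continuous_le_lbar (hH : IsHamiltonian H) (hc : c ≤ cHam H) {ε : ℝ}
    (hε : 0 < ε) : ∃ μ : ℝ → ℝ, Continuous μ ∧
      ∀ s ∈ Icc (0:ℝ) 1, ∀ lam, μ s * lam + (c - ε) ≤ Lbar H c s lam := by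
  set t : ℝ → Set ℝ := fun s =>
    {m | s ∈ Icc (0:ℝ) 1 → ∀ lam, m * lam + (c - ε) ≤ Lbar H c s lam}
  have ht : ∀ s, Convex ℝ (t s) := by
    intro s m₁ hm₁ m₂ hm₂ a b ha hb hab hs lam
    have e : (a • m₁ + b • m₂) * lam + (c - ε) =
        a * (m₁ * lam + (c - ε)) + b * (m₂ * lam + (c - ε)) := by
      simp only [smul_eq_mul]; linear_combination (ε - c) * hab
    rw [e]
    calc _ ≤ a * Lbar H c s lam + b * Lbar H c s lam :=
          add_le_add (mul_le_mul_of_nonneg_left (hm₁ hs lam) ha)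
            (mul_le_mul_of_nonneg_left (hm₂ hs lam) hb)
      _ = Lbar H c s lam := by rw [← add_mul, hab, one_mul]
  obtain ⟨μ, hμ⟩ := exists_continuous_forall_mem_convex_of_local_const ht fun x => by
    by_cases hx : x ∈ Icc (0:ℝ) 1
    · obtain ⟨m, hm⟩ := hH.exists_isLeast hx
      exact ⟨m, hH.eventually_le_lbar hc hε hx hm⟩
    · exact ⟨0, eventually_of_mem (isClosed_Icc.isOpen_compl.mem_nhds hx)
        fun y hy hy' => absurd hy' hy⟩
  exact ⟨μ, μ.continuous, fun s hs => hμ s hs⟩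

theorem mul_le_integral_lbar (hH : IsHamiltonian H) (hc : c ≤ cHam H) {a b : ℝ} (hab : a ≤ b)
    {η η' : ℝ → ℝ} (hAC : IsACDerivOn a b η η')
    (hrange : ∀ t ∈ Icc a b, η t ∈ Icc (0:ℝ) 1) (hend : η a = η b)
    (hInt : IntegrableOn (fun τ => Lbar H c (η τ) (η' τ)) (Icc a b)) :
    c * (b - a) ≤ ∫ τ in Icc a b, Lbar H c (η τ) (η' τ) := by
  refine le_of_forall_pos_le_add fun ε hε => ?_
  obtain ⟨δ, hδ, hδε⟩ : ∃ δ > 0, (b - a) * δ ≤ ε :=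
    ⟨ε / (b - a + 1), div_pos hε (by linarith), by
      rw [mul_div_assoc', div_le_iff₀ (by linarith)]; nlinarith⟩
  obtain ⟨μ, hμc, hμ⟩ := hH.exists_continuous_le_lbar hc hδ
  have hμη : IntegrableOn (fun τ => μ (η τ) * η' τ) (Icc a b) :=
    hAC.1.continuousOn_mul (hμc.comp_continuousOn (hAC.continuousOn hab)) isCompact_Icc
  have hconst : IntegrableOn (fun _ => c - δ) (Icc a b) :=
    integrableOn_const measure_Icc_lt_top.ne
  have hle := setIntegral_mono_on (f := fun τ => μ (η τ) * η' τ + (c - δ)) (hμη.add hconst)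
    hInt measurableSet_Icc fun τ hτ => hμ (η τ) (hrange τ hτ) (η' τ)
  rw [integral_add hμη hconst, hAC.setIntegral_comp_mul_eq_zero hab hend hμc,
    setIntegral_const, Real.volume_real_Icc_of_le hab, smul_eq_mul] at hle
  nlinarith

end IsHamiltonian

/-- Let `c ≤ c_H` and let `L̄` be the modified Lagrangian. Then for every
absolutely continuous curve `η : [a,b] → [0,1]` with `η(a) = η(b)`,
`∫_a^b L(η,η̇) dτ ≥ ∫_a^b L̄(η,η̇) dτ ≥ c (b - a)` (integrals in the extended sense). -/
theorem stmt3 (H : ℝ → ℝ → ℝ) (hH : IsHamiltonian H) (c : ℝ) (hc : c ≤ cHam H)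
    (a b : ℝ) (hab : a ≤ b) (η η' : ℝ → ℝ) (hAC : IsACDerivOn a b η η')
    (hrange : ∀ t ∈ Icc a b, η t ∈ Icc (0:ℝ) 1) (hend : η a = η b) :
    eIntegral a b (fun τ => ((Lagr H (η τ) (η' τ) : ℝ) : EReal)) ≥
      eIntegral a b (fun τ => ((Lbar H c (η τ) (η' τ) : ℝ) : EReal)) ∧
    eIntegral a b (fun τ => ((Lbar H c (η τ) (η' τ) : ℝ) : EReal)) ≥
      ((c * (b - a) : ℝ) : EReal) := by
  refine ⟨?_, coe_le_eIntegral_coe (hH.mul_le_integral_lbar hc hab hAC hrange hend)⟩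
  simp only [lbar_eq_lagr_add_indicator]
  refine eIntegral_coe_add_le ((toFinite _).integrableOn_indicator_comp _ measure_Icc_lt_top
    ((hAC.continuousOn hab).aemeasurable measurableSet_Icc)) fun τ => indicator_nonpos ?_ _
  intro s hs
  have hs01 : s ∈ Icc (0:ℝ) 1 := by rcases hs with rfl | rfl <;> simp
  linarith [hH.le_lagr_zero hc hs01]
end

section
/- Let H : [0,1]×ℝ → ℝ be continuous, convex and superlinear in the second variable, with Lagrangian L, and let U be a continuous real-valued function on the closure of Q. Suppose that for every (s,t) ∈ Q and every C¹ curve η taking values in [0,1] with η(t) = s, one has U(s,t) − U(η(t−δ), t−δ) ≤ ∫_{t−δ}^t L(η(τ),η̇(τ)) dτ for all sufficiently small δ > 0. Then U is a viscosity subsolution of U_t + H(s,U') = 0 in Q. -/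
open Set MeasureTheory Filter Topology
open scoped Classical

/-! Let `Φ` touch `U` from above at `(s₀, t₀) ∈ Q`, put `μ = Φ'(s₀, t₀)` and pick a subgradient `λ`
of `H(s₀, ·)` at `μ`, so that `L(s₀, λ) = λ μ - H(s₀, μ)`. Along a `C¹` curve `η` through `s₀` with
`η̇(t₀) = λ`, maximality of `U - Φ` and the hypothesis bound the backward difference quotient of
`σ ↦ Φ(η σ, σ)` at `t₀` by the mean of `L(η, η̇)` over `[σ, t₀]`. Superlinearity of `H` makes `L`
upper semicontinuous, so that mean is eventually below any `c > L(s₀, λ)`; in the limit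
`λ μ + Φ_t ≤ L(s₀, λ) = λ μ - H(s₀, μ)`. -/

theorem ConvexOn.exists_affine_le_of_mem_interior {S : Set ℝ} {f : ℝ → ℝ} {x : ℝ}
    (hf : ConvexOn ℝ S f) (hx : x ∈ interior S) :
    ∃ c : ℝ, ∀ y ∈ S, f x + c * (y - x) ≤ f y := by
  refine ⟨derivWithin f (Ioi x) x, fun y hy => ?_⟩
  rcases lt_trichotomy y x with hyx | rfl | hxy
  · have h := (hf.slope_le_leftDeriv_of_mem_interior hy hx hyx).trans
      (hf.leftDeriv_le_rightDeriv_of_mem_interior hx)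
    rw [slope_def_field, div_le_iff₀ (sub_pos.2 hyx)] at h
    linarith
  · simp
  · have h := hf.rightDeriv_le_slope_of_mem_interior hx hy hxy
    rw [slope_def_field, le_div_iff₀ (sub_pos.2 hxy)] at h
    linarith

theorem lagr_le {H : ℝ → ℝ → ℝ} {s lam c : ℝ} (h : ∀ μ, lam * μ - H s μ ≤ c) :
    Lagr H s lam ≤ c :=
  csSup_le (range_nonempty _) (forall_mem_range.2 h)

namespace IsHamiltonian

variable {H : ℝ → ℝ → ℝ}

theorem continuous_comp {α : Type*} [TopologicalSpace α] (hH : IsHamiltonian H) {f g : α → ℝ}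
    (hf : Continuous f) (hg : Continuous g) (hf01 : ∀ x, f x ∈ Icc (0:ℝ) 1) :
    Continuous fun x => H (f x) (g x) :=
  hH.cont.comp_continuous (hf.prodMk hg) fun x => ⟨hf01 x, mem_univ _⟩

theorem bddAbove_range_mul_sub (hH : IsHamiltonian H) {s : ℝ} (hs : s ∈ Icc (0:ℝ) 1)
    (lam : ℝ) : BddAbove (range fun μ => lam * μ - H s μ) := by
  obtain ⟨R, hR⟩ := hH.superlinear (|lam| + 1)
  have hcont : Continuous fun μ => lam * μ - H s μ :=
    (continuous_const.mul continuous_id).sub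
      (hH.continuous_comp continuous_const continuous_id fun _ => hs)
  obtain ⟨M, hM⟩ := (isCompact_Icc (a := -R) (b := R)).bddAbove_image hcont.continuousOn
  refine ⟨max M 0, forall_mem_range.2 fun μ => ?_⟩
  rcases le_or_gt R |μ| with hμ | hμ
  · have hlin : lam * μ ≤ |lam| * |μ| := (le_abs_self _).trans (abs_mul lam μ).le
    have := hR s hs μ hμ
    exact le_max_of_le_right (by linarith [abs_nonneg μ])
  · exact le_max_of_le_left (hM ⟨μ, abs_le.1 hμ.le, rfl⟩)

theorem mul_sub_le_lagr (hH : IsHamiltonian H) {s : ℝ} (hs : s ∈ Icc (0:ℝ) 1) (lam μ : ℝ) :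
    lam * μ - H s μ ≤ Lagr H s lam :=
  le_csSup (hH.bddAbove_range_mul_sub hs lam) ⟨μ, rfl⟩

theorem upperSemicontinuousOn_lagr (hH : IsHamiltonian H) :
    UpperSemicontinuousOn (fun p : ℝ × ℝ => Lagr H p.1 p.2) (Icc 0 1 ×ˢ univ) := by
  rintro ⟨s₀, lam₀⟩ ⟨hs₀ : s₀ ∈ Icc 0 1, -⟩ c (hc : Lagr H s₀ lam₀ < c)
  obtain ⟨c', hLc', hc'c⟩ := exists_between hc
  obtain ⟨R, hR⟩ := hH.superlinear (|lam₀| + 2)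
  obtain ⟨R₁, hRR₁, hR₁c'⟩ : ∃ R₁, R ≤ R₁ ∧ -R₁ ≤ c' :=
    ⟨max R (-c'), le_max_left _ _, neg_le.1 (le_max_right _ _)⟩
  -- Superlinearity disposes of `|ν| > R₁`; on the compact `[-R₁, R₁]` the tube lemma applies.
  have hcore : ∀ᶠ p in 𝓝[Icc 0 1 ×ˢ univ] (s₀, lam₀),
      ∀ ν ∈ Icc (-R₁) R₁, p.2 * ν - H p.1 ν < c' := by
    have hG : ContinuousOn (fun q : (ℝ × ℝ) × ℝ => q.1.2 * q.2 - H q.1.1 q.2)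
        ((Icc 0 1 ×ˢ univ) ×ˢ univ) :=
      (continuous_fst.snd.mul continuous_snd).continuousOn.sub
        (hH.cont.comp (continuous_fst.fst.prodMk continuous_snd).continuousOn
          fun q (hq : q ∈ (Icc 0 1 ×ˢ univ) ×ˢ univ) => ⟨hq.1.1, mem_univ _⟩)
    have hmem := isCompact_Icc.mem_prod_nhdsSet_of_forall
      (l := 𝓝[Icc 0 1 ×ˢ univ] (s₀, lam₀)) (K := Icc (-R₁) R₁)
      (s := {q | q.1.2 * q.2 - H q.1.1 q.2 < c'}) fun ν _ => by
        rw [← nhdsWithin_univ, ← nhdsWithin_prod_eq]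
        exact (hG _ ⟨⟨hs₀, mem_univ _⟩, mem_univ _⟩).eventually
          (eventually_lt_nhds ((hH.mul_sub_le_lagr hs₀ lam₀ ν).trans_lt hLc'))
    exact (Filter.eventually_of_mem hmem fun _ h => h).curry.mono
      fun _ h => h.self_of_nhdsSet
  have hnear : ∀ᶠ p : ℝ × ℝ in 𝓝[Icc 0 1 ×ˢ univ] (s₀, lam₀), |p.2 - lam₀| < 1 :=
    nhdsWithin_le_nhds ((continuous_snd.sub continuous_const).abs.continuousAt.eventually
      (eventually_lt_nhds (by simp)))
  filter_upwards [hcore, hnear, self_mem_nhdsWithin] with ⟨s, lam⟩ hcore hlam ⟨hs, _⟩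
  refine (lagr_le fun ν => ?_).trans_lt hc'c
  rcases le_or_gt |ν| R₁ with hν | hν
  · exact (hcore ν (abs_le.1 hν)).le
  · have hlam' : |lam| ≤ |lam₀| + 1 := by linarith [abs_sub_abs_le_abs_sub lam lam₀]
    have hlin : lam * ν ≤ (|lam₀| + 1) * |ν| :=
      ((le_abs_self _).trans (abs_mul lam ν).le).trans
        (mul_le_mul_of_nonneg_right hlam' (abs_nonneg ν))
    have hsuper := hR s hs ν (hRR₁.trans hν.le)
    linarith

end IsHamiltonian

theorem exists_contDiff_mem_Ioo_deriv_eq {a b s : ℝ} (hs : s ∈ Ioo a b) (t v : ℝ) :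
    ∃ η : ℝ → ℝ, ContDiff ℝ 1 η ∧ (∀ τ, η τ ∈ Ioo a b) ∧ η t = s ∧ deriv η t = v := by
  obtain ⟨r, hr, hra, hrb⟩ : ∃ r, 0 < r ∧ a < s - r ∧ s + r < b :=
    ⟨min (s - a) (b - s) / 2, by have := hs.1; have := hs.2; positivity,
      by linarith [min_le_left (s - a) (b - s), hs.1],
      by linarith [min_le_right (s - a) (b - s), hs.2]⟩
  have hderiv : ∀ τ, HasDerivAt (fun τ => s + r * Real.sin (v * (τ - t) / r))
      (v * Real.cos (v * (τ - t) / r)) τ := fun τ =>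
    ((((((hasDerivAt_id' τ).sub_const t).const_mul v).div_const r).sin.const_mul r).const_add
      s).congr_deriv (by field_simp)
  refine ⟨fun τ => s + r * Real.sin (v * (τ - t) / r), by fun_prop, fun τ => ?_,
    by simp, by simp [(hderiv t).deriv]⟩
  have := Real.neg_one_le_sin (v * (τ - t) / r)
  have := Real.sin_le_one (v * (τ - t) / r)
  constructor <;> nlinarith

theorem hasDerivAt_comp_graph {Φ : ℝ → ℝ → ℝ} {η : ℝ → ℝ} {t v : ℝ}
    (hΦ : DifferentiableAt ℝ (fun p : ℝ × ℝ => Φ p.1 p.2) (η t, t)) (hη : HasDerivAt η v t) :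
    HasDerivAt (fun σ => Φ (η σ) σ)
      (deriv (fun s => Φ s t) (η t) * v + deriv (fun σ => Φ (η t) σ) t) t := by
  set D := fderiv ℝ (fun p : ℝ × ℝ => Φ p.1 p.2) (η t, t)
  have hD := hΦ.hasFDerivAt
  have hs : HasDerivAt (fun s => Φ s t) (D (1, 0)) (η t) :=
    hD.comp_hasDerivAt (f := fun s => (s, t)) (η t)
      ((hasDerivAt_id' (η t)).prodMk (hasDerivAt_const _ t))
  have ht : HasDerivAt (fun σ => Φ (η t) σ) (D (0, 1)) t :=
    hD.comp_hasDerivAt (f := fun σ => (η t, σ)) t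
      ((hasDerivAt_const _ (η t)).prodMk (hasDerivAt_id' t))
  have hsplit : D (v, 1) = D (1, 0) * v + D (0, 1) := by
    rw [show ((v, 1) : ℝ × ℝ) = v • (1, 0) + (0, 1) by simp, map_add, map_smul, smul_eq_mul,
      mul_comm]
  rw [hs.deriv, ht.deriv, ← hsplit]
  exact hD.comp_hasDerivAt (f := fun σ => (η σ, σ)) t (hη.prodMk (hasDerivAt_id' t))

theorem HasDerivWithinAt.le_of_eventually_sub_le_mul {f : ℝ → ℝ} {d C x : ℝ}
    (hf : HasDerivWithinAt f d (Iio x) x) (h : ∀ᶠ y in 𝓝[<] x, f x - f y ≤ C * (x - y)) :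
    d ≤ C := by
  refine le_of_tendsto ((hasDerivWithinAt_iff_tendsto_slope' self_notMem_Iio).1 hf) ?_
  filter_upwards [h, self_mem_nhdsWithin] with y hy (hyx : y < x)
  rw [slope_def_field, ← neg_div_neg_eq, neg_sub, neg_sub, div_le_iff₀ (sub_pos.2 hyx)]
  exact hy

theorem UpperSemicontinuous.eventually_intervalIntegral_le {f g : ℝ → ℝ} {t c : ℝ}
    (hf : UpperSemicontinuous f) (hg : Continuous g) (hgf : ∀ τ, g τ ≤ f τ) (hc : f t < c) :
    ∀ᶠ σ in 𝓝[<] t, ∫ τ in σ..t, f τ ≤ (t - σ) * c := by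
  obtain ⟨ε, hε, hball⟩ := Metric.eventually_nhds_iff.1 (hf t c hc)
  filter_upwards [Ioo_mem_nhdsLT (show t - ε < t by linarith)] with σ ⟨hσε, hσt⟩
  have hfc : ∀ τ ∈ Icc σ t, f τ ≤ c := fun τ hτ => (hball (by
    rw [Real.dist_eq, abs_lt]; constructor <;> linarith [hτ.1, hτ.2])).le
  obtain ⟨m, hm⟩ := isCompact_Icc.bddBelow_image (hg.continuousOn (s := Icc σ t))
  have hint : IntegrableOn f (Icc σ t) := by
    refine Measure.integrableOn_of_bounded (M := max |m| |c|) measure_Icc_lt_top.ne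
      hf.measurable.aestronglyMeasurable ((ae_restrict_iff' measurableSet_Icc).2
        (Eventually.of_forall fun τ hτ => ?_))
    have := hm ⟨τ, hτ, rfl⟩
    rw [Real.norm_eq_abs, abs_le]
    constructor
    · linarith [neg_abs_le m, le_max_left |m| |c|, hgf τ]
    · linarith [le_abs_self c, le_max_right |m| |c|, hfc τ hτ]
  calc ∫ τ in σ..t, f τ ≤ ∫ _ in σ..t, c :=
        intervalIntegral.integral_mono_on hσt.le
          ((intervalIntegrable_iff_integrableOn_Icc_of_le hσt.le).2 hint)
          intervalIntegrable_const hfc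
    _ = (t - σ) * c := by simp

theorem IsLocalMaxOn.le_lagr_of_hasDerivAt {H U Φ : ℝ → ℝ → ℝ} (hH : IsHamiltonian H)
    {η : ℝ → ℝ} {s₀ t₀ d : ℝ}
    (hmax : IsLocalMaxOn (fun q : ℝ × ℝ => U q.1 q.2 - Φ q.1 q.2) Qset (s₀, t₀))
    (ht₀ : 0 < t₀) (hηC1 : ContDiff ℝ 1 η) (hηQ : ∀ τ, η τ ∈ Ioo (0:ℝ) 1) (hηt₀ : η t₀ = s₀)
    (hΦη : HasDerivAt (fun σ => Φ (η σ) σ) d t₀)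
    (hU : ∃ δ₀ > (0:ℝ), ∀ δ : ℝ, 0 < δ → δ < δ₀ →
      U s₀ t₀ - U (η (t₀ - δ)) (t₀ - δ) ≤ ∫ τ in (t₀ - δ)..t₀, Lagr H (η τ) (deriv η τ)) :
    d ≤ Lagr H s₀ (deriv η t₀) := by
  have hη01 : ∀ τ, η τ ∈ Icc (0:ℝ) 1 := fun τ => Ioo_subset_Icc_self (hηQ τ)
  have hcost : UpperSemicontinuous fun τ => Lagr H (η τ) (deriv η τ) := by
    rw [← upperSemicontinuousOn_univ_iff]
    exact hH.upperSemicontinuousOn_lagr.comp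
      (hηC1.continuous.prodMk (hηC1.continuous_deriv le_rfl)).continuousOn
      fun τ _ => ⟨hη01 τ, mem_univ _⟩
  have hcurve : Tendsto (fun σ => (η σ, σ)) (𝓝[<] t₀) (𝓝[Qset] (s₀, t₀)) := by
    refine tendsto_nhdsWithin_iff.2 ⟨?_, ?_⟩
    · exact ((hηC1.continuous.prodMk continuous_id).tendsto' t₀ _ (by simp [hηt₀])).mono_left
        nhdsWithin_le_nhds
    · filter_upwards [Ioo_mem_nhdsLT ht₀] with σ hσ using ⟨hηQ σ, hσ.1⟩
  obtain ⟨δ₀, hδ₀, hU⟩ := hU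
  refine le_of_forall_gt_imp_ge_of_dense fun c hc => ?_
  have hint := hcost.eventually_intervalIntegral_le
    (hH.continuous_comp hηC1.continuous continuous_const hη01).neg
    (fun τ => by simpa using hH.mul_sub_le_lagr (hη01 τ) (deriv η τ) 0)
    (show Lagr H (η t₀) (deriv η t₀) < c by rwa [hηt₀])
  refine hΦη.hasDerivWithinAt.le_of_eventually_sub_le_mul ?_
  filter_upwards [hint, hcurve.eventually hmax, Ioo_mem_nhdsLT (sub_lt_self t₀ hδ₀)]
    with σ hint hmaxσ ⟨hσ, hσt⟩
  have := hU (t₀ - σ) (by linarith) (by linarith)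
  rw [sub_sub_cancel] at this
  simp only [hηt₀] at hmaxσ ⊢
  linarith

theorem stmt18_general (H : ℝ → ℝ → ℝ) (hH : IsHamiltonian H) (U : ℝ → ℝ → ℝ)
    (h : ∀ s t : ℝ, (s, t) ∈ Qset → ∀ η : ℝ → ℝ, ContDiff ℝ 1 η →
      (∀ τ : ℝ, η τ ∈ Icc (0:ℝ) 1) → η t = s →
      ∃ δ₀ > (0:ℝ), ∀ δ : ℝ, 0 < δ → δ < δ₀ →
        U s t - U (η (t - δ)) (t - δ) ≤ ∫ τ in (t - δ)..t, Lagr H (η τ) (deriv η τ)) :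
    IsViscSubsol H U := by
  rintro Φ hΦ ⟨s₀, t₀⟩ ⟨hs₀, ht₀ : 0 < t₀⟩ hmax
  set μ := deriv (fun s => Φ s t₀) s₀
  set Φt := deriv (fun t => Φ s₀ t) t₀
  obtain ⟨lam, hlam⟩ := (hH.convex s₀ (Ioo_subset_Icc_self hs₀)).exists_affine_le_of_mem_interior
    (x := μ) (by simp)
  have hfenchel : Lagr H s₀ lam ≤ lam * μ - H s₀ μ :=
    lagr_le fun ν => by linarith [hlam ν (mem_univ ν)]
  obtain ⟨η, hηC1, hηQ, hηt₀, hη't₀⟩ := exists_contDiff_mem_Ioo_deriv_eq hs₀ t₀ lam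
  have hΦη : HasDerivAt (fun σ => Φ (η σ) σ) (μ * lam + Φt) t₀ := by
    have hη := (hηC1.differentiable one_ne_zero t₀).hasDerivAt
    rw [hη't₀] at hη
    have := hasDerivAt_comp_graph (hΦ.differentiable one_ne_zero _) hη
    rwa [hηt₀] at this
  have hslope := hmax.le_lagr_of_hasDerivAt hH ht₀ hηC1 hηQ hηt₀ hΦη
    (h s₀ t₀ ⟨hs₀, ht₀⟩ η hηC1 (fun τ => Ioo_subset_Icc_self (hηQ τ)) hηt₀)
  rw [hη't₀] at hslope
  show Φt + H s₀ μ ≤ 0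
  linarith

/-- Let `U` be continuous on the closure of `Q` and suppose that for every
`(s,t) ∈ Q` and every `C¹` curve `η` with values in `[0,1]` and `η(t) = s`, one has
`U(s,t) - U(η(t-δ), t-δ) ≤ ∫_{t-δ}^t L(η,η̇) dτ` for all sufficiently small `δ > 0`. Then
`U` is a viscosity subsolution of `U_t + H(s,U') = 0` in `Q`. -/
theorem stmt18 (H : ℝ → ℝ → ℝ) (hH : IsHamiltonian H) (U : ℝ → ℝ → ℝ)
    (hU : ContinuousOn (fun p : ℝ × ℝ => U p.1 p.2) (Icc 0 1 ×ˢ Ici 0))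
    (h : ∀ s t : ℝ, (s, t) ∈ Qset → ∀ η : ℝ → ℝ, ContDiff ℝ 1 η →
      (∀ τ : ℝ, η τ ∈ Icc (0:ℝ) 1) → η t = s →
      ∃ δ₀ > (0:ℝ), ∀ δ : ℝ, 0 < δ → δ < δ₀ →
        U s t - U (η (t - δ)) (t - δ) ≤ ∫ τ in (t - δ)..t, Lagr H (η τ) (deriv η τ)) :
    IsViscSubsol H U :=
  stmt18_general H hH U h
end
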